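/- arXiv:2211.03159 — 2 statements merged into one kernel-verified Lean document; each statement's English description precedes it below -/
import Mathlib

section
/- Let f : ℝ → ℝ be bounded measurable and let w : [0,T] → ℝ be measurable. If the averaged field T^w_{s,t} f(x) := ∫ₛᵗ f(x + w(r)) dr is, for all 0 ≤ s ≤ t ≤ T, Lipschitz in x with constant L·(t − s) for some fixed L ≥ 0, then for any x₀ the equation x(t) = x₀ + ∫₀ᵗ f(x(s) + w(s)) ds has at most one continuous solution whose difference from any other solution satisfies a Grönwall-type bound; in particular, any two continuous solutions with the same initial condition coincide, provided each solution x satisfies ∫ₛᵗ f(x(r) + w(r)) dr = T^w_{s,t} f(x(s)) + o(t−s) uniformly (sewing remainder bound |∫ₛᵗ f(x(r)+w(r)) dr − T^w_{s,t} f(x(s))| ≤ C(t−s)^{1+ε} for some ε > 0). -/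
open intervalIntegral

/-!
Write `φ(t) = |x₁(t) − x₂(t)|`. Over a short interval `[s, t]` each solution moves by the
averaged field `T^w_{s,t} f` evaluated at its left endpoint, up to the sewing remainder
`C (t − s)^{1+ε}`, and the averaged field is `L (t − s)`-Lipschitz. Hence
`φ(t) ≤ (1 + L (t − s)) φ(s) + 2C (t − s)^{1+ε}`, so the right Dini derivative of `φ` is at most
`L φ`, since the remainder is `o(t − s)`. Grönwall's inequality then gives
`φ(t) ≤ φ(0) e^{L t} = 0`.
-/

open Set Filter Topology MeasureTheory Real
open scoped Interval

/-- The averaged field `T^w_{s,t} f (x)`. -/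
noncomputable def averagedField (f w : ℝ → ℝ) (s t x : ℝ) : ℝ := ∫ r in s..t, f (x + w r)

theorem intervalIntegrable_comp_add_of_bounded {f w x : ℝ → ℝ} {M a b : ℝ} (hf : Measurable f)
    (hfM : ∀ y, |f y| ≤ M) (hw : Measurable w) (hx : ContinuousOn x (uIcc a b)) :
    IntervalIntegrable (fun r => f (x r + w r)) volume a b := by
  have hxw : AEMeasurable (fun r => x r + w r) (volume.restrict (Ι a b)) :=
    ((hx.aemeasurable measurableSet_uIcc).mono_set uIoc_subset_uIcc).add hw.aemeasurable
  exact intervalIntegrable_const.mono_fun' (hf.comp_aemeasurable hxw).aestronglyMeasurable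
    (ae_of_all _ fun r => hfM _)

theorem sub_eq_integral_of_eq_add_integral {f w x : ℝ → ℝ} {M a b x₀ s t : ℝ}
    (hf : Measurable f) (hfM : ∀ y, |f y| ≤ M) (hw : Measurable w)
    (hx : ContinuousOn x (Icc a b))
    (heq : ∀ t ∈ Icc a b, x t = x₀ + ∫ r in a..t, f (x r + w r))
    (hs : s ∈ Icc a b) (ht : t ∈ Icc a b) :
    x t - x s = ∫ r in s..t, f (x r + w r) := by
  have hint : ∀ u ∈ Icc a b, IntervalIntegrable (fun r => f (x r + w r)) volume a u :=
    fun u hu => intervalIntegrable_comp_add_of_bounded hf hfM hw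
      (hx.mono (uIcc_subset_Icc (left_mem_Icc.2 (hu.1.trans hu.2)) hu))
  rw [heq t ht, heq s hs, add_sub_add_left_eq_sub,
    integral_interval_sub_left (hint t ht) (hint s hs)]

theorem abs_sub_le_of_increment_eq_integral {f w x₁ x₂ : ℝ → ℝ} {s t L R : ℝ}
    (hinc₁ : x₁ t - x₁ s = ∫ r in s..t, f (x₁ r + w r))
    (hinc₂ : x₂ t - x₂ s = ∫ r in s..t, f (x₂ r + w r))
    (hLip : |averagedField f w s t (x₁ s) - averagedField f w s t (x₂ s)|
      ≤ L * (t - s) * |x₁ s - x₂ s|)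
    (hsew₁ : |(∫ r in s..t, f (x₁ r + w r)) - averagedField f w s t (x₁ s)| ≤ R)
    (hsew₂ : |(∫ r in s..t, f (x₂ r + w r)) - averagedField f w s t (x₂ s)| ≤ R) :
    |x₁ t - x₂ t| ≤ |x₁ s - x₂ s| + L * (t - s) * |x₁ s - x₂ s| + 2 * R := by
  set e₁ := (∫ r in s..t, f (x₁ r + w r)) - averagedField f w s t (x₁ s)
  set e₂ := (∫ r in s..t, f (x₂ r + w r)) - averagedField f w s t (x₂ s)
  set d := averagedField f w s t (x₁ s) - averagedField f w s t (x₂ s)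
  have hsplit : x₁ t - x₂ t = (x₁ s - x₂ s) + e₁ + d - e₂ := by
    simp only [e₁, e₂, d]
    linarith
  calc |x₁ t - x₂ t| ≤ |x₁ s - x₂ s + e₁ + d| + |e₂| := hsplit ▸ abs_sub _ _
    _ ≤ |x₁ s - x₂ s| + |e₁| + |d| + |e₂| := by gcongr; exact abs_add_three _ _ _
    _ ≤ |x₁ s - x₂ s| + L * (t - s) * |x₁ s - x₂ s| + 2 * R := by linarith

theorem le_mul_exp_of_le_add_mul_add_rpow {φ : ℝ → ℝ} {a b L C ε : ℝ} (hε : 0 < ε)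
    (hφ : ContinuousOn φ (Icc a b))
    (hinc : ∀ s t, a ≤ s → s ≤ t → t ≤ b →
      φ t ≤ φ s + L * (t - s) * φ s + C * (t - s) ^ (1 + ε)) :
    ∀ t ∈ Icc a b, φ t ≤ φ a * exp (L * (t - a)) := by
  suffices hderiv : ∀ s ∈ Ico a b, ∀ r, L * φ s < r →
      ∃ᶠ z in 𝓝[>] s, (z - s)⁻¹ * (φ z - φ s) < r by
    intro t ht
    simpa only [gronwallBound_ε0] using le_gronwallBound_of_liminf_deriv_right_le hφ hderiv
      le_rfl (fun _ _ => (add_zero _).ge) t ht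
  intro s hs r hr
  refine Eventually.frequently ?_
  have hrem : Tendsto (fun z => L * φ s + C * (z - s) ^ ε) (𝓝[>] s) (𝓝 (L * φ s)) := by
    have hcont : Continuous fun z => L * φ s + C * (z - s) ^ ε := by
      fun_prop (disch := exact hε.le)
    simpa [zero_rpow hε.ne'] using (hcont.tendsto s).mono_left nhdsWithin_le_nhds
  filter_upwards [hrem.eventually_lt_const hr, Ioo_mem_nhdsGT hs.2] with z hzr hz
  have hzs : 0 < z - s := sub_pos.2 hz.1
  calc (z - s)⁻¹ * (φ z - φ s)
      ≤ (z - s)⁻¹ * (L * (z - s) * φ s + C * (z - s) ^ (1 + ε)) := by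
        gcongr
        linarith [hinc s z hs.1 hz.1.le hz.2.le]
    _ = L * φ s + C * (z - s) ^ ε := by
        rw [rpow_add hzs, rpow_one]
        field_simp
    _ < r := hzr

theorem uniqueness_via_averaged_field_and_sewing_general
    (f : ℝ → ℝ) (hf : Measurable f) (Mf : ℝ) (hMf : ∀ y, |f y| ≤ Mf)
    (T : ℝ) (hT : 0 ≤ T) (w : ℝ → ℝ) (hw : Measurable w)
    (L : ℝ)
    (hLip : ∀ s t : ℝ, 0 ≤ s → s ≤ t → t ≤ T → ∀ x y : ℝ,
      |(∫ r in s..t, f (x + w r)) - ∫ r in s..t, f (y + w r)| ≤ L * (t - s) * |x - y|)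
    (ε : ℝ) (hε : 0 < ε) (C : ℝ)
    (x₀ : ℝ) (x₁ x₂ : ℝ → ℝ)
    (hx₁ : ContinuousOn x₁ (Set.Icc 0 T)) (hx₂ : ContinuousOn x₂ (Set.Icc 0 T))
    (heq₁ : ∀ t ∈ Set.Icc (0:ℝ) T, x₁ t = x₀ + ∫ s in (0:ℝ)..t, f (x₁ s + w s))
    (heq₂ : ∀ t ∈ Set.Icc (0:ℝ) T, x₂ t = x₀ + ∫ s in (0:ℝ)..t, f (x₂ s + w s))
    (hsew₁ : ∀ s t : ℝ, 0 ≤ s → s ≤ t → t ≤ T →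
      |(∫ r in s..t, f (x₁ r + w r)) - ∫ r in s..t, f (x₁ s + w r)| ≤ C * (t - s) ^ (1 + ε))
    (hsew₂ : ∀ s t : ℝ, 0 ≤ s → s ≤ t → t ≤ T →
      |(∫ r in s..t, f (x₂ r + w r)) - ∫ r in s..t, f (x₂ s + w r)| ≤ C * (t - s) ^ (1 + ε)) :
    Set.EqOn x₁ x₂ (Set.Icc 0 T) := by
  have hstep : ∀ s t, 0 ≤ s → s ≤ t → t ≤ T → |x₁ t - x₂ t|
      ≤ |x₁ s - x₂ s| + L * (t - s) * |x₁ s - x₂ s| + 2 * C * (t - s) ^ (1 + ε) := by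
    intro s t hs hst ht
    have hsI : s ∈ Icc 0 T := ⟨hs, hst.trans ht⟩
    have htI : t ∈ Icc 0 T := ⟨hs.trans hst, ht⟩
    rw [mul_assoc 2]
    exact abs_sub_le_of_increment_eq_integral
      (sub_eq_integral_of_eq_add_integral hf hMf hw hx₁ heq₁ hsI htI)
      (sub_eq_integral_of_eq_add_integral hf hMf hw hx₂ heq₂ hsI htI)
      (hLip s t hs hst ht _ _) (hsew₁ s t hs hst ht) (hsew₂ s t hs hst ht)
  have hstart : |x₁ 0 - x₂ 0| = 0 := by
    simp [heq₁ 0 ⟨le_rfl, hT⟩, heq₂ 0 ⟨le_rfl, hT⟩]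
  intro t ht
  have hbound := le_mul_exp_of_le_add_mul_add_rpow (φ := fun t => |x₁ t - x₂ t|) hε
    (hx₁.sub hx₂).abs hstep t ht
  rw [hstart, zero_mul] at hbound
  exact sub_eq_zero.mp (abs_nonpos_iff.mp hbound)

theorem uniqueness_via_averaged_field_and_sewing
    (f : ℝ → ℝ) (hf : Measurable f) (Mf : ℝ) (hMf : ∀ y, |f y| ≤ Mf)
    (T : ℝ) (hT : 0 ≤ T) (w : ℝ → ℝ) (hw : Measurable w)
    (L : ℝ) (hL : 0 ≤ L)
    (hLip : ∀ s t : ℝ, 0 ≤ s → s ≤ t → t ≤ T → ∀ x y : ℝ,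
      |(∫ r in s..t, f (x + w r)) - ∫ r in s..t, f (y + w r)| ≤ L * (t - s) * |x - y|)
    (ε : ℝ) (hε : 0 < ε) (C : ℝ) (hC : 0 ≤ C)
    (x₀ : ℝ) (x₁ x₂ : ℝ → ℝ)
    (hx₁ : ContinuousOn x₁ (Set.Icc 0 T)) (hx₂ : ContinuousOn x₂ (Set.Icc 0 T))
    (heq₁ : ∀ t ∈ Set.Icc (0:ℝ) T, x₁ t = x₀ + ∫ s in (0:ℝ)..t, f (x₁ s + w s))
    (heq₂ : ∀ t ∈ Set.Icc (0:ℝ) T, x₂ t = x₀ + ∫ s in (0:ℝ)..t, f (x₂ s + w s))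
    (hsew₁ : ∀ s t : ℝ, 0 ≤ s → s ≤ t → t ≤ T →
      |(∫ r in s..t, f (x₁ r + w r)) - ∫ r in s..t, f (x₁ s + w r)| ≤ C * (t - s) ^ (1 + ε))
    (hsew₂ : ∀ s t : ℝ, 0 ≤ s → s ≤ t → t ≤ T →
      |(∫ r in s..t, f (x₂ r + w r)) - ∫ r in s..t, f (x₂ s + w r)| ≤ C * (t - s) ^ (1 + ε)) :
    Set.EqOn x₁ x₂ (Set.Icc 0 T) :=
  uniqueness_via_averaged_field_and_sewing_general f hf Mf hMf T hT w hw L hLip ε hε C x₀ x₁ x₂ hx₁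
    hx₂ heq₁ heq₂ hsew₁ hsew₂
end

section
/- Let w : [0,T] → ℝ be measurable and suppose there exist γ ∈ (0,1) and c > 0 such that for all 0 ≤ s < t ≤ T and all x ∈ ℝ, the occupation measure bound |{r ∈ [s,t] : |x + w(r)| ≤ ε}| ≤ c ε^γ (t−s)^{1−γ} holds for all ε > 0. Then for f(y) = |y|^{−β} 𝟙_{|y| ≤ 1} with 0 < β < γ, the averaged function T^w_{s,t} f(x) = ∫ₛᵗ f(x + w(r)) dr is finite and bounded uniformly in x by a constant times (t−s)^{1−γ} + (t−s). -/
open intervalIntegral MeasureTheory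

set_option maxHeartbeats 1000000 in
private lemma aux_singular_measurable (β : ℝ) :
    Measurable (fun y : ℝ => if |y| ≤ 1 then |y| ^ (-β) else 0) :=
  Measurable.ite (measurableSet_le measurable_abs measurable_const)
    (by measurability) measurable_const

theorem averaging_regularizes_singularity
    (T : ℝ) (hT : 0 < T) (w : ℝ → ℝ) (hw : Measurable w)
    (γ c : ℝ) (hγ0 : 0 < γ) (hγ1 : γ < 1) (hc : 0 < c)
    (hocc : ∀ s t : ℝ, 0 ≤ s → s < t → t ≤ T → ∀ x ε : ℝ, 0 < ε →
      volume {r ∈ Set.Icc s t | |x + w r| ≤ ε}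
        ≤ ENNReal.ofReal (c * ε ^ γ * (t - s) ^ (1 - γ)))
    (β : ℝ) (hβ0 : 0 < β) (hβγ : β < γ)
    (f : ℝ → ℝ) (hfdef : ∀ y : ℝ, f y = if |y| ≤ 1 then |y| ^ (-β) else 0) :
    ∃ K : ℝ, 0 ≤ K ∧ ∀ s t : ℝ, 0 ≤ s → s ≤ t → t ≤ T → ∀ x : ℝ,
      IntervalIntegrable (fun r => f (x + w r)) volume s t ∧
      (∫ r in s..t, f (x + w r)) ≤ K * ((t - s) ^ (1 - γ) + (t - s)) := by
  have hβγ' : (0:ℝ) < γ - β := by linarith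
  set K : ℝ := 1 + c * (β / (γ - β)) with hK
  have hKpos : (0:ℝ) < K := by positivity
  refine ⟨K, hKpos.le, ?_⟩
  intro s t hs hst ht x
  -- measurability and nonnegativity
  have hfmeas : Measurable f := by
    have hfe : f = fun y => if |y| ≤ 1 then |y| ^ (-β) else 0 := funext hfdef
    rw [hfe]
    exact aux_singular_measurable β
  have hg : Measurable (fun r => f (x + w r)) := hfmeas.comp (measurable_const.add hw)
  have hg0 : ∀ r : ℝ, 0 ≤ f (x + w r) := by
    intro r
    rw [hfdef]
    split
    · exact Real.rpow_nonneg (abs_nonneg _) _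
    · exact le_rfl
  rcases eq_or_lt_of_le hst with rfl | hst'
  · constructor
    · rw [intervalIntegrable_iff_integrableOn_Ioc_of_le le_rfl]
      simp
    · rw [integral_same, sub_self, Real.zero_rpow (by linarith : (1:ℝ) - γ ≠ 0)]
      simp
  -- main case: s < t
  have hts0 : (0:ℝ) ≤ t - s := by linarith
  have hA0 : (0:ℝ) ≤ (t - s) ^ (1 - γ) := Real.rpow_nonneg hts0 _
  have key : ∫⁻ r in Set.Icc s t, ENNReal.ofReal (f (x + w r)) ≤
      ENNReal.ofReal (K * ((t - s) ^ (1 - γ) + (t - s))) := by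
    rw [lintegral_eq_lintegral_meas_lt _ (Filter.Eventually.of_forall hg0) hg.aemeasurable]
    rw [← Set.Ioc_union_Ioi_eq_Ioi (zero_le_one (α := ℝ)),
      lintegral_union measurableSet_Ioi (Set.Ioc_disjoint_Ioi le_rfl)]
    have h1 : ∫⁻ l in Set.Ioc (0:ℝ) 1,
        (volume.restrict (Set.Icc s t)) {r | l < f (x + w r)} ≤ ENNReal.ofReal (t - s) := by
      calc ∫⁻ l in Set.Ioc (0:ℝ) 1, (volume.restrict (Set.Icc s t)) {r | l < f (x + w r)}
          ≤ ∫⁻ _ in Set.Ioc (0:ℝ) 1, ENNReal.ofReal (t - s) := by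
            refine setLIntegral_mono' measurableSet_Ioc (fun l _ => ?_)
            calc (volume.restrict (Set.Icc s t)) {r | l < f (x + w r)}
                ≤ (volume.restrict (Set.Icc s t)) Set.univ := measure_mono (Set.subset_univ _)
              _ = volume (Set.Icc s t) := by simp
              _ = ENNReal.ofReal (t - s) := Real.volume_Icc
        _ = ENNReal.ofReal (t - s) * volume (Set.Ioc (0:ℝ) 1) := setLIntegral_const _ _
        _ ≤ ENNReal.ofReal (t - s) := by
            rw [Real.volume_Ioc]
            simp
    have h2 : ∫⁻ l in Set.Ioi (1:ℝ),
        (volume.restrict (Set.Icc s t)) {r | l < f (x + w r)}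
        ≤ ENNReal.ofReal (c * (t - s) ^ (1 - γ) * (β / (γ - β))) := by
      have ha : -(γ / β) < -1 := by
        rw [neg_lt_neg_iff, lt_div_iff₀ hβ0]
        linarith
      calc ∫⁻ l in Set.Ioi (1:ℝ), (volume.restrict (Set.Icc s t)) {r | l < f (x + w r)}
          ≤ ∫⁻ l in Set.Ioi (1:ℝ),
              ENNReal.ofReal (c * (t - s) ^ (1 - γ) * l ^ (-(γ / β))) := by
            refine setLIntegral_mono' measurableSet_Ioi (fun l hl => ?_)
            have hl1 : (1:ℝ) < l := hl
            have hl0 : (0:ℝ) < l := lt_trans zero_lt_one hl1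
            set ε : ℝ := l ^ (-(1 / β)) with hε
            have hεpos : 0 < ε := Real.rpow_pos_of_pos hl0 _
            have hsub : {r | l < f (x + w r)} ∩ Set.Icc s t
                ⊆ {r ∈ Set.Icc s t | |x + w r| ≤ ε} := by
              rintro r ⟨hrl, hrIcc⟩
              refine ⟨hrIcc, ?_⟩
              have hrl' : l < f (x + w r) := hrl
              rw [hfdef] at hrl'
              by_cases hle : |x + w r| ≤ 1
              · rw [if_pos hle] at hrl'
                rcases eq_or_lt_of_le (abs_nonneg (x + w r)) with h0 | hapos
                · exfalso
                  rw [← h0, Real.zero_rpow (by linarith : -β ≠ 0)] at hrl'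
                  linarith
                · have hlt : (|x + w r| ^ (-β)) ^ (-(1 / β)) < l ^ (-(1 / β)) := by
                    refine Real.rpow_lt_rpow_of_neg hl0 hrl' ?_
                    rw [neg_lt_zero]
                    positivity
                  have heq : (|x + w r| ^ (-β)) ^ (-(1 / β)) = |x + w r| := by
                    rw [← Real.rpow_mul (abs_nonneg _),
                      show (-β) * (-(1 / β)) = 1 by field_simp, Real.rpow_one]
                  rw [heq] at hlt
                  exact le_of_lt hlt
              · rw [if_neg hle] at hrl'
                linarith
            have hmeas : MeasurableSet {r | l < f (x + w r)} :=
              measurableSet_lt measurable_const hg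
            rw [Measure.restrict_apply hmeas]
            calc volume ({r | l < f (x + w r)} ∩ Set.Icc s t)
                ≤ volume {r ∈ Set.Icc s t | |x + w r| ≤ ε} := measure_mono hsub
              _ ≤ ENNReal.ofReal (c * ε ^ γ * (t - s) ^ (1 - γ)) :=
                  hocc s t hs hst' ht x ε hεpos
              _ = ENNReal.ofReal (c * (t - s) ^ (1 - γ) * l ^ (-(γ / β))) := by
                  congr 1
                  have : ε ^ γ = l ^ (-(γ / β)) := by
                    rw [hε, ← Real.rpow_mul (le_of_lt hl0)]
                    congr 1
                    field_simp
                  rw [this]; ring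
        _ = ENNReal.ofReal (∫ l in Set.Ioi (1:ℝ), c * (t - s) ^ (1 - γ) * l ^ (-(γ / β))) := by
            refine (ofReal_integral_eq_lintegral_ofReal ?_ ?_).symm
            · exact (integrableOn_Ioi_rpow_of_lt ha zero_lt_one).const_mul _
            · filter_upwards [ae_restrict_mem measurableSet_Ioi] with l hl
              have hl0 : (0:ℝ) < l := lt_trans zero_lt_one hl
              have := Real.rpow_nonneg (le_of_lt hl0) (-(γ / β))
              positivity
        _ = ENNReal.ofReal (c * (t - s) ^ (1 - γ) * (β / (γ - β))) := by
            rw [MeasureTheory.integral_const_mul, integral_Ioi_rpow_of_lt ha zero_lt_one]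
            have hne : -(γ / β) + 1 ≠ 0 := by
              have : -(γ / β) + 1 < 0 := by
                have : (1:ℝ) < γ / β := (one_lt_div hβ0).mpr hβγ
                linarith
              exact ne_of_lt this
            rw [Real.one_rpow]
            have hdiv : (-1 : ℝ) / (-(γ / β) + 1) = β / (γ - β) := by
              rw [div_eq_div_iff hne (ne_of_gt hβγ')]
              field_simp
              ring
            rw [hdiv]
    calc (∫⁻ l in Set.Ioc (0:ℝ) 1, (volume.restrict (Set.Icc s t)) {r | l < f (x + w r)})
          + ∫⁻ l in Set.Ioi (1:ℝ), (volume.restrict (Set.Icc s t)) {r | l < f (x + w r)}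
        ≤ ENNReal.ofReal (t - s) + ENNReal.ofReal (c * (t - s) ^ (1 - γ) * (β / (γ - β))) :=
          add_le_add h1 h2
      _ ≤ ENNReal.ofReal (K * ((t - s) ^ (1 - γ) + (t - s))) := by
          rw [← ENNReal.ofReal_add hts0 (by positivity)]
          refine ENNReal.ofReal_le_ofReal ?_
          have h1' : (0:ℝ) ≤ c * (β / (γ - β)) * (t - s) := by positivity
          nlinarith [hA0, hts0]
  -- integrability
  have hIoc : ∫⁻ r in Set.Ioc s t, ENNReal.ofReal (f (x + w r)) ≤
      ENNReal.ofReal (K * ((t - s) ^ (1 - γ) + (t - s))) :=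
    le_trans (lintegral_mono' (Measure.restrict_mono Set.Ioc_subset_Icc_self le_rfl) le_rfl) key
  have hInt : IntegrableOn (fun r => f (x + w r)) (Set.Ioc s t) volume := by
    refine ⟨hg.aestronglyMeasurable, ?_⟩
    rw [hasFiniteIntegral_iff_norm]
    have heq : ∀ r : ℝ, ENNReal.ofReal ‖f (x + w r)‖ = ENNReal.ofReal (f (x + w r)) := by
      intro r; rw [Real.norm_eq_abs, abs_of_nonneg (hg0 r)]
    simp_rw [heq]
    exact lt_of_le_of_lt hIoc ENNReal.ofReal_lt_top
  constructor
  · exact (intervalIntegrable_iff_integrableOn_Ioc_of_le hst).mpr hInt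
  · rw [integral_of_le hst,
      MeasureTheory.integral_eq_lintegral_of_nonneg_ae
        (Filter.Eventually.of_forall hg0) hg.aestronglyMeasurable]
    calc (∫⁻ r in Set.Ioc s t, ENNReal.ofReal (f (x + w r))).toReal
        ≤ (ENNReal.ofReal (K * ((t - s) ^ (1 - γ) + (t - s)))).toReal :=
          ENNReal.toReal_mono ENNReal.ofReal_ne_top hIoc
      _ = K * ((t - s) ^ (1 - γ) + (t - s)) := ENNReal.toReal_ofReal (by positivity)
end
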